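/- arXiv:2412.10376 — 3 statements merged into one kernel-verified Lean document; each statement's English description precedes it below -/
import Mathlib

section
/- Let f be continuous on [0,2π] and j ≥ 1 an integer. Then a_j = (1/π)∫₀^{2π} f(x)cos(jx)dx can be written as a_j = (1/(πj)) Σ_{k=1}^{2j} (−1)^{k−1} (f(x_{2k−1}) − f(x_{2k})), for some points x_{2k−1}, x_{2k} ∈ [π(k−1)/j, πk/j] with x_{2k−1} ≤ x_{2k}. -/
/-!
On a half-period `[iπ, (i+1)π]` the cosine changes sign exactly once, at the midpoint, so the
first mean value theorem for integrals applies on each quarter-period; since `∫ cos` over the two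
quarters is `±(-1)^i`, this gives `∫ g(u) cos u = (-1)^i (g c - g d)` with `c ≤ d`.
The substitution `u = j t` cuts `[0, 2π]` into `2j` such half-periods.
-/

open Real Set intervalIntegral

theorem exists_integral_mul_cos_eq_sub {h : ℝ → ℝ} (hh : ContinuousOn h (Icc 0 π)) :
    ∃ c d, c ∈ Icc 0 π ∧ d ∈ Icc 0 π ∧ c ≤ d ∧
      ∫ x in 0..π, h x * cos x = h c - h d := by
  have h0 : 0 ≤ π / 2 := by positivity
  have h1 : π / 2 ≤ π := by linarith [pi_pos]
  have hh₀ : ContinuousOn h (Icc 0 (π / 2)) := hh.mono (Icc_subset_Icc_right h1)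
  have hh₁ : ContinuousOn h (Icc (π / 2) π) := hh.mono (Icc_subset_Icc_left h0)
  obtain ⟨c, hc, hc_eq⟩ :=
    exists_eq_const_mul_intervalIntegral_of_nonneg (μ := MeasureTheory.volume)
    (uIcc_of_le h0 ▸ hh₀) (continuous_cos.intervalIntegrable _ _) fun x hx => by
      rw [uIoc_of_le h0] at hx
      exact cos_nonneg_of_mem_Icc ⟨by linarith [hx.1, pi_pos], hx.2⟩
  obtain ⟨d, hd, hd_eq⟩ :=
    exists_eq_const_mul_intervalIntegral_of_nonneg (μ := MeasureTheory.volume)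
    (uIcc_of_le h1 ▸ hh₁) (continuous_cos.neg.intervalIntegrable _ _) fun x hx => by
      rw [uIoc_of_le h1] at hx
      exact neg_nonneg.2 (cos_nonpos_of_pi_div_two_le_of_le hx.1.le (by linarith [hx.2, pi_pos]))
  rw [uIcc_of_le h0] at hc
  rw [uIcc_of_le h1] at hd
  refine ⟨c, d, Icc_subset_Icc_right h1 hc, Icc_subset_Icc_left h0 hd, hc.2.trans hd.1, ?_⟩
  simp only [Pi.neg_apply, mul_neg, integral_neg, integral_cos, sin_pi_div_two, sin_zero, sin_pi]
    at hc_eq hd_eq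
  rw [← integral_add_adjacent_intervals (b := π / 2) (f := fun x => h x * cos x)
    ((hh₀.mul continuous_cos.continuousOn).intervalIntegrable_of_Icc h0)
    ((hh₁.mul continuous_cos.continuousOn).intervalIntegrable_of_Icc h1)]
  linarith

theorem exists_integral_mul_cos_eq_neg_one_pow_mul_sub {g : ℝ → ℝ} (i : ℕ)
    (hg : ContinuousOn g (Icc (i * π) ((i + 1) * π))) :
    ∃ c d, c ∈ Icc (i * π) ((i + 1) * π) ∧ d ∈ Icc (i * π) ((i + 1) * π) ∧ c ≤ d ∧
      ∫ x in i * π..(i + 1) * π, g x * cos x = (-1) ^ i * (g c - g d) := by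
  have hshift : MapsTo (· + i * π) (Icc 0 π) (Icc (i * π) ((i + 1) * π)) :=
    fun x hx => ⟨by linarith [hx.1], by linarith [hx.2]⟩
  obtain ⟨c, d, hc, hd, hcd, h_eq⟩ :=
    exists_integral_mul_cos_eq_sub (hg.comp (continuous_add_const _).continuousOn hshift)
  refine ⟨c + i * π, d + i * π, hshift hc, hshift hd, by linarith, ?_⟩
  calc ∫ x in i * π..(i + 1) * π, g x * cos x
      = ∫ x in 0..π, g (x + i * π) * cos (x + i * π) := by
        rw [integral_comp_add_right (fun x => g x * cos x), zero_add, add_one_mul, add_comm]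
    _ = (-1) ^ i * ∫ x in 0..π, g (x + i * π) * cos x := by
        simp_rw [cos_add_nat_mul_pi, ← integral_const_mul, mul_left_comm]
    _ = (-1) ^ i * (g (c + i * π) - g (d + i * π)) := congrArg _ h_eq

theorem exists_integral_mul_cos_eq_sum {g : ℝ → ℝ} (n : ℕ)
    (hg : ContinuousOn g (Icc 0 (n * π))) :
    ∃ c d : ℕ → ℝ, (∀ i < n, c i ∈ Icc (i * π) ((i + 1) * π) ∧
        d i ∈ Icc (i * π) ((i + 1) * π) ∧ c i ≤ d i) ∧
      ∫ x in 0..n * π, g x * cos x =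
        ∑ i ∈ Finset.range n, (-1) ^ i * (g (c i) - g (d i)) := by
  have hsub : ∀ i < n, Icc ((i : ℝ) * π) ((i + 1) * π) ⊆ Icc 0 (n * π) := fun i hi =>
    Icc_subset_Icc (by positivity) (by gcongr; exact_mod_cast hi)
  -- `i < n →` sits inside the existential so that `choose` yields total `c d : ℕ → ℝ`.
  have hpiece : ∀ i : ℕ, ∃ c d, i < n → c ∈ Icc (i * π) ((i + 1) * π) ∧
      d ∈ Icc (i * π) ((i + 1) * π) ∧ c ≤ d ∧
      ∫ x in i * π..(i + 1) * π, g x * cos x = (-1) ^ i * (g c - g d) := by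
    intro i
    by_cases hi : i < n
    · obtain ⟨c, d, h⟩ :=
        exists_integral_mul_cos_eq_neg_one_pow_mul_sub i (hg.mono (hsub i hi))
      exact ⟨c, d, fun _ => h⟩
    · exact ⟨0, 0, fun h => absurd h hi⟩
  choose c d hcd using hpiece
  refine ⟨c, d, fun i hi => ⟨(hcd i hi).1, (hcd i hi).2.1, (hcd i hi).2.2.1⟩, ?_⟩
  have hsplit := sum_integral_adjacent_intervals (a := fun i : ℕ => (i : ℝ) * π)
    (f := fun x => g x * cos x) (μ := MeasureTheory.volume) (n := n) fun i hi => by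
      push_cast
      exact ContinuousOn.intervalIntegrable_of_Icc (by gcongr; linarith)
        ((hg.mono (hsub i hi)).mul continuous_cos.continuousOn)
  simp only [Nat.cast_zero, zero_mul, Nat.cast_succ] at hsplit
  rw [← hsplit]
  exact Finset.sum_congr rfl fun i hi => (hcd i (Finset.mem_range.1 hi)).2.2.2

theorem integral_mul_cos_const_mul {f : ℝ → ℝ} {j : ℝ} (hj : j ≠ 0) (a b : ℝ) :
    ∫ t in a..b, f t * cos (j * t) = j⁻¹ * ∫ u in j * a..j * b, f (u / j) * cos u := calc
  _ = ∫ t in a..b, f (j * t / j) * cos (j * t) := by simp_rw [mul_div_cancel_left₀ _ hj]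
  _ = _ := integral_comp_mul_left (fun u => f (u / j) * cos u) hj

theorem exists_interleave {α : Type*} (c d : ℕ → α) :
    ∃ x : ℕ → α, ∀ k, 1 ≤ k → x (2 * k - 1) = c (k - 1) ∧ x (2 * k) = d (k - 1) := by
  refine ⟨fun m => (if Even m then d else c) ((m - 1) / 2), fun k hk => ?_⟩
  have hodd : ¬Even (2 * k - 1) := Nat.not_even_iff_odd.2 ⟨k - 1, by omega⟩
  simp only [hodd, even_two_mul, if_false, if_true]
  constructor <;> congr 1 <;> omega

theorem sum_Icc_one_eq_sum_range {M : Type*} [AddCommMonoid M] (f : ℕ → M) (n : ℕ) :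
    ∑ k ∈ Finset.Icc 1 n, f k = ∑ i ∈ Finset.range n, f (i + 1) := by
  rw [Finset.range_eq_Ico, Finset.sum_Ico_add' f, zero_add, Finset.Ico_add_one_right_eq_Icc]

theorem fourier_cosine_coeff_mean_value_repr (f : ℝ → ℝ)
    (hf : ContinuousOn f (Set.Icc 0 (2 * π)))
    (j : ℕ) (hj : 1 ≤ j) :
    ∃ x : ℕ → ℝ,
      (∀ k ∈ Finset.Icc 1 (2 * j),
        x (2 * k - 1) ∈ Set.Icc (π * ((k : ℝ) - 1) / j) (π * k / j) ∧
        x (2 * k) ∈ Set.Icc (π * ((k : ℝ) - 1) / j) (π * k / j) ∧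
        x (2 * k - 1) ≤ x (2 * k)) ∧
      (1 / π) * ∫ t in (0:ℝ)..(2 * π), f t * Real.cos (j * t) =
        (1 / (π * j)) * ∑ k ∈ Finset.Icc 1 (2 * j),
          (-1 : ℝ) ^ (k - 1) * (f (x (2 * k - 1)) - f (x (2 * k))) := by
  have hj0 : (0 : ℝ) < j := by exact_mod_cast hj
  have hg : ContinuousOn (fun u => f (u / j)) (Icc 0 ((2 * j : ℕ) * π)) :=
    hf.comp (continuous_id.div_const _).continuousOn fun u ⟨hu0, hu⟩ =>
      ⟨div_nonneg hu0 hj0.le, by rw [div_le_iff₀ hj0]; push_cast at hu; linarith⟩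
  obtain ⟨c, d, hcd, hsum⟩ := exists_integral_mul_cos_eq_sum (2 * j) hg
  obtain ⟨x, hx⟩ := exists_interleave (c · / j) (d · / j)
  refine ⟨x, fun k hk => ?_, ?_⟩
  · obtain ⟨hk1, hk2⟩ := Finset.mem_Icc.1 hk
    obtain ⟨hc, hd, hle⟩ := hcd (k - 1) (by omega)
    have hdiv : ∀ u ∈ Icc (((k - 1 : ℕ) : ℝ) * π) ((((k - 1 : ℕ) : ℝ) + 1) * π),
        u / j ∈ Icc (π * ((k : ℝ) - 1) / j) (π * k / j) := by
      rintro u ⟨h1, h2⟩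
      rw [Nat.cast_sub hk1, Nat.cast_one] at h1 h2
      constructor <;> gcongr <;> linarith
    rw [(hx k hk1).1, (hx k hk1).2]
    exact ⟨hdiv _ hc, hdiv _ hd, by gcongr⟩
  · have hbound : (j : ℝ) * (2 * π) = (2 * j : ℕ) * π := by push_cast; ring
    rw [integral_mul_cos_const_mul hj0.ne', mul_zero, hbound, hsum, sum_Icc_one_eq_sum_range,
      Finset.mul_sum, Finset.mul_sum, Finset.mul_sum]
    refine Finset.sum_congr rfl fun i _ => ?_
    rw [(hx (i + 1) le_add_self).1, (hx (i + 1) le_add_self).2, Nat.add_sub_cancel]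
    field_simp
end

section
/- Let f be continuous on [0,2π] and j ≥ 1 an integer. Then there exist points x_1 ≤ x_2 ≤ … ≤ x_{4j} in [0,2π] with x_{2k−1}, x_{2k} ∈ [π(k−1)/j, πk/j] such that |a_j| ≤ (1/(πj)) Σ_{k=1}^{2j} |f(x_{2k−1}) − f(x_{2k})|, where a_j = (1/π)∫₀^{2π} f(x)cos(jx)dx. -/
/-!
Cut `[0, 2π]` at the zeros `π i / j` of `sin (j t)` into `2 j` pieces. On each piece
`∫ cos (j t) = 0` and `∫ |cos (j t)| = 2 / j`, so `f` may be replaced by `f - c` with `c` the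
midrange of `f` on the piece, and the piece contributes at most `(max f - min f) / j`. The points
where `f` attains its maximum and minimum, sorted, are `x (2 k - 1) ≤ x (2 k)`.
-/

open Real Set intervalIntegral
open MeasureTheory (volume ae_of_all)

def interleave {α : Type*} (u v : ℕ → α) (n : ℕ) : α :=
  if Even n then v ((n - 1) / 2) else u ((n - 1) / 2)

section Interleave
variable {α : Type*} {u v : ℕ → α}

theorem interleave_two_mul (k : ℕ) : interleave u v (2 * k) = v (k - 1) := by
  simp [interleave, show (2 * k - 1) / 2 = k - 1 by omega]

theorem interleave_two_mul_add_one (k : ℕ) : interleave u v (2 * k + 1) = u k := by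
  simp [interleave]

theorem interleave_two_mul_sub_one {k : ℕ} (hk : 1 ≤ k) :
    interleave u v (2 * k - 1) = u (k - 1) := by
  rw [show 2 * k - 1 = 2 * (k - 1) + 1 by omega, interleave_two_mul_add_one]

theorem sum_interleave {M : Type*} [AddCommMonoid M] (g : α → α → M) (n : ℕ) :
    ∑ k ∈ Finset.Icc 1 n, g (interleave u v (2 * k - 1)) (interleave u v (2 * k)) =
      ∑ i ∈ Finset.range n, g (u i) (v i) := by
  rw [← Finset.Ico_add_one_right_eq_Icc, Finset.sum_Ico_eq_sum_range, Nat.add_sub_cancel]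
  refine Finset.sum_congr rfl fun i _ => ?_
  rw [interleave_two_mul_sub_one (by omega), interleave_two_mul, add_tsub_cancel_left]

variable [Preorder α] {a : ℕ → α} {n : ℕ}

theorem interleave_le_interleave_succ
    (hchain : ∀ i < n, a i ≤ u i ∧ u i ≤ v i ∧ v i ≤ a (i + 1)) {k : ℕ} (hk : 1 ≤ k)
    (hkn : k < 2 * n) :
    interleave u v k ≤ interleave u v (k + 1) := by
  rcases Nat.even_or_odd' k with ⟨i, rfl | rfl⟩
  · obtain ⟨i, rfl⟩ : ∃ i', i = i' + 1 := ⟨i - 1, by omega⟩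
    rw [interleave_two_mul, interleave_two_mul_add_one, Nat.add_sub_cancel]
    exact (hchain i (by omega)).2.2.trans (hchain (i + 1) (by omega)).1
  · rw [interleave_two_mul_add_one, show 2 * i + 1 + 1 = 2 * (i + 1) by ring, interleave_two_mul,
      Nat.add_sub_cancel]
    exact (hchain i (by omega)).2.1

theorem interleave_pair_mem_Icc
    (hchain : ∀ i < n, a i ≤ u i ∧ u i ≤ v i ∧ v i ≤ a (i + 1)) {k : ℕ}
    (hk : k ∈ Finset.Icc 1 n) :
    interleave u v (2 * k - 1) ∈ Set.Icc (a (k - 1)) (a k) ∧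
      interleave u v (2 * k) ∈ Set.Icc (a (k - 1)) (a k) := by
  rw [Finset.mem_Icc] at hk
  obtain ⟨hu, huv, hv⟩ := hchain (k - 1) (by omega)
  rw [Nat.sub_add_cancel hk.1] at hv
  rw [interleave_two_mul_sub_one hk.1, interleave_two_mul]
  exact ⟨⟨hu, huv.trans hv⟩, hu.trans huv, hv⟩

theorem interleave_mem_Icc (hchain : ∀ i < n, a i ≤ u i ∧ u i ≤ v i ∧ v i ≤ a (i + 1))
    (ha : Monotone a) {k : ℕ} (hk : k ∈ Finset.Icc 1 (2 * n)) :
    interleave u v k ∈ Set.Icc (a 0) (a n) := by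
  rw [Finset.mem_Icc] at hk
  rcases Nat.even_or_odd' k with ⟨i, rfl | rfl⟩
  · have hmem := (interleave_pair_mem_Icc hchain (k := i) (by rw [Finset.mem_Icc]; omega)).2
    exact Set.Icc_subset_Icc (ha (Nat.zero_le _)) (ha (by omega)) hmem
  · rw [show 2 * i + 1 = 2 * (i + 1) - 1 by omega]
    have hmem := (interleave_pair_mem_Icc hchain (k := i + 1) (by rw [Finset.mem_Icc]; omega)).1
    exact Set.Icc_subset_Icc (ha (Nat.zero_le _)) (ha (by omega)) hmem

end Interleave

theorem abs_integral_mul_le_of_integral_eq_zero {f w : ℝ → ℝ} {a b m M : ℝ} (hab : a ≤ b)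
    (hfw : IntervalIntegrable (fun t => f t * w t) volume a b)
    (hw : IntervalIntegrable w volume a b) (hw0 : ∫ t in a..b, w t = 0)
    (hm : ∀ t ∈ Icc a b, m ≤ f t) (hM : ∀ t ∈ Icc a b, f t ≤ M) :
    |∫ t in a..b, f t * w t| ≤ (M - m) / 2 * ∫ t in a..b, |w t| := by
  set c := (m + M) / 2 with hc
  have hshift : ∫ t in a..b, f t * w t = ∫ t in a..b, (f t - c) * w t := by
    simp_rw [sub_mul]
    rw [integral_sub hfw (hw.const_mul c), integral_const_mul, hw0, mul_zero, sub_zero]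
  rw [hshift, ← integral_const_mul, ← Real.norm_eq_abs]
  refine norm_integral_le_of_norm_le hab (ae_of_all _ fun t ht => ?_) (hw.abs.const_mul _)
  have ht' : t ∈ Icc a b := Ioc_subset_Icc_self ht
  rw [Real.norm_eq_abs, abs_mul]
  gcongr
  rw [abs_le]
  constructor <;> linarith [hm t ht', hM t ht', hc]

theorem exists_abs_integral_mul_le_of_integral_eq_zero {f w : ℝ → ℝ} {a b : ℝ}
    (hab : a ≤ b) (hf : ContinuousOn f (Icc a b)) (hw : IntervalIntegrable w volume a b)
    (hw0 : ∫ t in a..b, w t = 0) :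
    ∃ u v, a ≤ u ∧ u ≤ v ∧ v ≤ b ∧
      |∫ t in a..b, f t * w t| ≤ |f u - f v| / 2 * ∫ t in a..b, |w t| := by
  have hne : (Icc a b).Nonempty := nonempty_Icc.mpr hab
  obtain ⟨p, hp, hpmax⟩ := isCompact_Icc.exists_isMaxOn hne hf
  obtain ⟨q, hq, hqmin⟩ := isCompact_Icc.exists_isMinOn hne hf
  have hfw : IntervalIntegrable (fun t => f t * w t) volume a b :=
    hw.continuousOn_mul (by rwa [uIcc_of_le hab])
  have hbound := abs_integral_mul_le_of_integral_eq_zero hab hfw hw hw0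
    (fun t ht => hqmin ht) (fun t ht => hpmax ht)
  have hpq : f p - f q = |f (min p q) - f (max p q)| := by
    rw [← abs_of_nonneg (sub_nonneg.2 (hqmin hp))]
    rcases le_total p q with h | h <;> simp [h, abs_sub_comm]
  exact ⟨min p q, max p q, le_min hp.1 hq.1, min_le_max, max_le hp.2 hq.2, hpq ▸ hbound⟩

theorem integral_abs_cos_add_pi (a : ℝ) : ∫ s in a..a + π, |cos s| = 2 := by
  have hper : Function.Periodic (fun s => |cos s|) π := fun s => by simp [cos_add_pi]
  rw [hper.intervalIntegral_add_eq a (-(π / 2)), show -(π / 2) + π = π / 2 by ring,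
    integral_congr fun s hs => abs_of_nonneg (cos_nonneg_of_mem_Icc ?_)]
  · norm_num
  · rwa [uIcc_of_le (by linarith [pi_pos])] at hs

theorem integral_abs_cos_mul {c : ℝ} (hc : c ≠ 0) (a : ℝ) :
    ∫ t in a / c..(a + π) / c, |cos (c * t)| = 2 / c := by
  rw [integral_comp_mul_left (fun s => |cos s|) hc, mul_div_cancel₀ _ hc, mul_div_cancel₀ _ hc,
    integral_abs_cos_add_pi, smul_eq_mul, div_eq_inv_mul]

theorem integral_cos_mul_int_mul_pi {c : ℝ} (hc : c ≠ 0) (k : ℤ) :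
    ∫ t in π * k / c..π * (k + 1) / c, cos (c * t) = 0 := by
  rw [integral_comp_mul_left (fun s => cos s) hc, mul_div_cancel₀ _ hc, mul_div_cancel₀ _ hc,
    integral_cos]
  have := sin_int_mul_pi (k + 1)
  push_cast at this
  simp [mul_comm π, this, sin_int_mul_pi]

theorem exists_abs_integral_mul_cos_le {f : ℝ → ℝ} {c : ℝ} (hc : 0 < c) (k : ℤ)
    (hf : ContinuousOn f (Icc (π * k / c) (π * (k + 1) / c))) :
    ∃ u v, π * k / c ≤ u ∧ u ≤ v ∧ v ≤ π * (k + 1) / c ∧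
      |∫ t in π * k / c..π * (k + 1) / c, f t * cos (c * t)| ≤ |f u - f v| / c := by
  have hle : π * k / c ≤ π * (k + 1) / c := by gcongr; linarith
  have hcos : IntervalIntegrable (fun t => cos (c * t)) volume (π * k / c) (π * (k + 1) / c) :=
    (continuous_cos.comp (continuous_const_mul c)).intervalIntegrable _ _
  obtain ⟨u, v, hu, huv, hv, hbound⟩ := exists_abs_integral_mul_le_of_integral_eq_zero hle hf
    hcos (integral_cos_mul_int_mul_pi hc.ne' k)
  have habs := integral_abs_cos_mul hc.ne' (π * k)
  rw [← mul_add_one] at habs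
  refine ⟨u, v, hu, huv, hv, hbound.trans_eq ?_⟩
  rw [habs]
  field_simp

theorem exists_abs_integral_mul_cos_le_sum {f : ℝ → ℝ} {c : ℝ} (hc : 0 < c) (n : ℕ)
    (hf : ContinuousOn f (Icc 0 (π * n / c))) :
    ∃ u v : ℕ → ℝ,
      (∀ i < n, π * i / c ≤ u i ∧ u i ≤ v i ∧ v i ≤ π * (i + 1 : ℕ) / c) ∧
      |∫ t in 0..π * n / c, f t * cos (c * t)| ≤
        ∑ i ∈ Finset.range n, |f (u i) - f (v i)| / c := by
  set a : ℕ → ℝ := fun i => π * i / c with ha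
  have hmono : Monotone a := fun i i' h => by simp only [ha]; gcongr
  have hsub : ∀ i < n, Icc (a i) (a (i + 1)) ⊆ Icc 0 (a n) := fun i hi =>
    Icc_subset_Icc (by simpa [ha] using hmono (Nat.zero_le i)) (hmono hi)
  have piece : ∀ i, ∃ u v, i < n → a i ≤ u ∧ u ≤ v ∧ v ≤ a (i + 1) ∧
      |∫ t in a i..a (i + 1), f t * cos (c * t)| ≤ |f u - f v| / c := by
    intro i
    by_cases hi : i < n
    · obtain ⟨u, v, h⟩ := exists_abs_integral_mul_cos_le hc i
        (by simpa [ha] using hf.mono (hsub i hi))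
      exact ⟨u, v, fun _ => by simpa [ha] using h⟩
    · exact ⟨0, 0, fun h => absurd h hi⟩
  choose u v hpiece using piece
  have hint : ∀ i < n, IntervalIntegrable (fun t => f t * cos (c * t)) volume (a i) (a (i + 1)) :=
    fun i hi => ((hf.mono (hsub i hi)).mul (continuous_cos.comp
      (continuous_const_mul c)).continuousOn).intervalIntegrable_of_Icc (hmono i.le_succ)
  refine ⟨u, v, fun i hi => (hpiece i hi).imp_right fun h => h.imp_right And.left, ?_⟩
  have hsum := sum_integral_adjacent_intervals hint
  rw [show a 0 = 0 by simp [ha]] at hsum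
  rw [show π * n / c = a n from rfl, ← hsum]
  exact (Finset.abs_sum_le_sum_abs _ _).trans
    (Finset.sum_le_sum fun i hi => (hpiece i (Finset.mem_range.1 hi)).2.2.2)

theorem fourier_cosine_coeff_sum_bound (f : ℝ → ℝ)
    (hf : ContinuousOn f (Set.Icc 0 (2 * π)))
    (j : ℕ) (hj : 1 ≤ j) :
    ∃ x : ℕ → ℝ,
      (∀ k, 1 ≤ k → k < 4 * j → x k ≤ x (k + 1)) ∧
      (∀ k ∈ Finset.Icc 1 (4 * j), x k ∈ Set.Icc 0 (2 * π)) ∧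
      (∀ k ∈ Finset.Icc 1 (2 * j),
        x (2 * k - 1) ∈ Set.Icc (π * ((k : ℝ) - 1) / j) (π * k / j) ∧
        x (2 * k) ∈ Set.Icc (π * ((k : ℝ) - 1) / j) (π * k / j)) ∧
      |(1 / π) * ∫ t in (0:ℝ)..(2 * π), f t * Real.cos (j * t)| ≤
        (1 / (π * j)) * ∑ k ∈ Finset.Icc 1 (2 * j),
          |f (x (2 * k - 1)) - f (x (2 * k))| := by
  have hj0 : (0 : ℝ) < j := by exact_mod_cast hj
  have h2pi : 2 * π = π * (2 * j : ℕ) / j := by push_cast; field_simp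
  rw [h2pi] at hf ⊢
  obtain ⟨u, v, hchain, hbound⟩ := exists_abs_integral_mul_cos_le_sum hj0 (2 * j) hf
  have hmono : Monotone fun i : ℕ => π * i / j := fun i i' h => by dsimp only; gcongr
  refine ⟨interleave u v, fun k hk hkn => interleave_le_interleave_succ hchain hk (by omega),
    fun k hk => ?_, fun k hk => ?_, ?_⟩
  · simpa using interleave_mem_Icc hchain hmono (by rwa [← mul_assoc])
  · simpa [Nat.cast_sub (Finset.mem_Icc.1 hk).1] using interleave_pair_mem_Icc hchain hk
  · rw [sum_interleave (fun p q => |f p - f q|), abs_mul, abs_of_pos (by positivity),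
      one_div_mul_eq_div]
    calc _ ≤ (∑ i ∈ Finset.range (2 * j), |f (u i) - f (v i)| / j) / π := by gcongr
      _ = _ := by rw [← Finset.sum_div]; field_simp
end

section
/- Let f be continuous of bounded variation on [0,2π], j ≥ 1, and let g be continuous on [0,2π] with j-th Fourier cosine coefficient 0. If h is continuous with |h(x) − g(x)| ≤ δ/2 for all x ∈ [0,2π] and h − g attains the uniform bound so that the total variation of h − g is at most N·δ for some N ∈ ℕ, and δ ≤ |a_j⁰|·πj/(qN) with q > 0 and a_j⁰ ≠ 0, then the j-th Fourier cosine coefficient of h has absolute value at most |a_j⁰|/q. -/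
/-!
Since the `j`-th cosine coefficient of `g` vanishes, that of `h` equals that of `u = h - g`.
Integrating by parts against `sin (j x) / j`, which vanishes at `0` and `2π` and is bounded by
`1 / j`, gives `|∫ u(x) cos(j x) dx| ≤ Var(u) / j`. For a continuous function of bounded
variation the integration by parts is carried out on Riemann–Stieltjes sums over fine uniform
partitions: uniform continuity controls the error on each piece, and Abel summation turns
`∑ u(xᵢ) (Φ(xᵢ₊₁) - Φ(xᵢ))` into `-∑ (u(xᵢ₊₁) - u(xᵢ)) Φ(xᵢ₊₁)`. Hence
`|a_j(h)| ≤ N δ / (π j) ≤ |a_j⁰| / q`.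
-/

open Real Set Finset intervalIntegral

lemma sum_range_mul_sub_by_parts (f G : ℕ → ℝ) (n : ℕ) :
    ∑ i ∈ range n, f i * (G (i + 1) - G i) =
      f n * G n - f 0 * G 0 - ∑ i ∈ range n, (f (i + 1) - f i) * G (i + 1) := by
  induction n with
  | zero => simp
  | succ n ih =>
    rw [sum_range_succ, sum_range_succ, ih]
    ring

lemma abs_sum_mul_sub_le {f G : ℕ → ℝ} {n : ℕ} {M : ℝ} (hG0 : G 0 = 0) (hGn : G n = 0)
    (hGM : ∀ i, |G i| ≤ M) :
    |∑ i ∈ range n, f i * (G (i + 1) - G i)| ≤ M * ∑ i ∈ range n, |f (i + 1) - f i| := by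
  rw [sum_range_mul_sub_by_parts, hG0, hGn, mul_sum]
  calc |f n * 0 - f 0 * 0 - ∑ i ∈ range n, (f (i + 1) - f i) * G (i + 1)|
      = |∑ i ∈ range n, (f (i + 1) - f i) * G (i + 1)| := by simp
    _ ≤ ∑ i ∈ range n, |(f (i + 1) - f i) * G (i + 1)| := abs_sum_le_sum_abs _ _
    _ ≤ ∑ i ∈ range n, M * |f (i + 1) - f i| := by
      gcongr with i
      rw [abs_mul, mul_comm]
      exact mul_le_mul_of_nonneg_right (hGM _) (abs_nonneg _)

lemma BoundedVariationOn.sum_dist_le {α E : Type*} [LinearOrder α] [PseudoMetricSpace E]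
    {f : α → E} {s : Set α} (hf : BoundedVariationOn f s) {x : ℕ → α} (hx : Monotone x)
    (hxs : ∀ i, x i ∈ s) (n : ℕ) :
    ∑ i ∈ range n, dist (f (x (i + 1))) (f (x i)) ≤ (eVariationOn f s).toReal := by
  rw [← ENNReal.ofReal_le_iff_le_toReal hf, ENNReal.ofReal_sum_of_nonneg fun _ _ ↦ dist_nonneg]
  simp_rw [← edist_dist]
  exact eVariationOn.sum_le hx hxs

lemma exists_monotone_partition_Icc {a b d : ℝ} (hab : a ≤ b) (hd : 0 < d) :
    ∃ (n : ℕ) (x : ℕ → ℝ), Monotone x ∧ x 0 = a ∧ x n = b ∧ (∀ i, x i ∈ Icc a b) ∧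
      ∀ i, x (i + 1) - x i ≤ d := by
  obtain ⟨n, hn⟩ := exists_nat_ge ((b - a) / d)
  refine ⟨n, fun i ↦ min (a + i * d) b, fun i k hik ↦ ?_, by simp [hab], ?_, fun i ↦ ?_, fun i ↦ ?_⟩
  · have : (i : ℝ) ≤ k := by exact_mod_cast hik
    dsimp only
    gcongr
  · rw [div_le_iff₀ hd] at hn
    exact min_eq_right (by linarith)
  · exact ⟨le_min (by nlinarith [i.cast_nonneg (α := ℝ)]) hab, min_le_right _ _⟩
  · push_cast
    rw [add_one_mul, ← add_assoc]
    rcases le_total (a + i * d) b with h | h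
    · rw [min_eq_left h]
      linarith [min_le_left (a + i * d + d) b]
    · rw [min_eq_right h, min_eq_right (by linarith)]
      linarith

lemma abs_integral_mul_sub_le {u φ Φ : ℝ → ℝ} {c d η K : ℝ} (hcd : c ≤ d)
    (hu : ContinuousOn u (Icc c d)) (hφ : ContinuousOn φ (Icc c d))
    (hΦ : ∀ x ∈ Icc c d, HasDerivAt Φ (φ x) x)
    (huη : ∀ x ∈ Icc c d, |u x - u c| ≤ η) (hφK : ∀ x ∈ Icc c d, |φ x| ≤ K) :
    |(∫ x in c..d, u x * φ x) - u c * (Φ d - Φ c)| ≤ η * K * (d - c) := by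
  have hφint : IntervalIntegrable φ MeasureTheory.volume c d := hφ.intervalIntegrable_of_Icc hcd
  have hFTC : ∫ x in c..d, φ x = Φ d - Φ c :=
    integral_eq_sub_of_hasDerivAt (fun x hx ↦ hΦ x (uIcc_of_le hcd ▸ hx)) hφint
  have hrw : (∫ x in c..d, u x * φ x) - u c * (Φ d - Φ c) = ∫ x in c..d, (u x - u c) * φ x := by
    rw [← hFTC, ← integral_const_mul, ← integral_sub (f := fun x ↦ u x * φ x)
      ((hu.mul hφ).intervalIntegrable_of_Icc hcd) (hφint.const_mul _)]
    simp_rw [sub_mul]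
  rw [hrw, ← Real.norm_eq_abs, ← abs_of_nonneg (sub_nonneg.2 hcd)]
  refine norm_integral_le_of_norm_le_const fun x hx ↦ ?_
  have hx : x ∈ Icc c d := Ioc_subset_Icc_self (uIoc_of_le hcd ▸ hx)
  rw [Real.norm_eq_abs, abs_mul]
  exact mul_le_mul (huη x hx) (hφK x hx) (abs_nonneg _) ((abs_nonneg _).trans (huη x hx))

lemma abs_integral_mul_le_of_partition {u φ Φ : ℝ → ℝ} {a b M K η : ℝ} {n : ℕ} {x : ℕ → ℝ}
    (hx : Monotone x) (hx0 : x 0 = a) (hxn : x n = b) (hxmem : ∀ i, x i ∈ Icc a b)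
    (hu : ContinuousOn u (Icc a b)) (hubv : BoundedVariationOn u (Icc a b))
    (hφ : ContinuousOn φ (Icc a b)) (hΦ : ∀ y ∈ Icc a b, HasDerivAt Φ (φ y) y)
    (hΦa : Φ a = 0) (hΦb : Φ b = 0) (hΦM : ∀ y ∈ Icc a b, |Φ y| ≤ M)
    (hφK : ∀ y ∈ Icc a b, |φ y| ≤ K)
    (hosc : ∀ i, ∀ y ∈ Icc (x i) (x (i + 1)), |u y - u (x i)| ≤ η) :
    |∫ y in a..b, u y * φ y| ≤ M * (eVariationOn u (Icc a b)).toReal + η * K * (b - a) := by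
  have hsub (i : ℕ) : Icc (x i) (x (i + 1)) ⊆ Icc a b :=
    Icc_subset_Icc (hxmem i).1 (hxmem (i + 1)).2
  have hsplit : ∫ y in a..b, u y * φ y = ∑ i ∈ range n, ∫ y in x i..x (i + 1), u y * φ y := by
    rw [← hx0, ← hxn, sum_integral_adjacent_intervals]
    exact fun i _ ↦ ((hu.mul hφ).mono (hsub i)).intervalIntegrable_of_Icc (hx i.le_succ)
  have hstieltjes : |∑ i ∈ range n, u (x i) * (Φ (x (i + 1)) - Φ (x i))|
      ≤ M * (eVariationOn u (Icc a b)).toReal := by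
    have hM : 0 ≤ M := (abs_nonneg _).trans (hΦM a (hx0 ▸ hxmem 0))
    refine (abs_sum_mul_sub_le (G := Φ ∘ x) (by simp [hx0, hΦa]) (by simp [hxn, hΦb])
      fun i ↦ hΦM _ (hxmem i)).trans ?_
    gcongr
    simpa only [← Real.dist_eq] using hubv.sum_dist_le hx hxmem n
  have herror : |∑ i ∈ range n, ((∫ y in x i..x (i + 1), u y * φ y)
      - u (x i) * (Φ (x (i + 1)) - Φ (x i)))| ≤ η * K * (b - a) :=
    calc _ ≤ ∑ i ∈ range n, η * K * (x (i + 1) - x i) :=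
          (abs_sum_le_sum_abs _ _).trans <| sum_le_sum fun i _ ↦
            abs_integral_mul_sub_le (hx i.le_succ) (hu.mono (hsub i)) (hφ.mono (hsub i))
              (fun y hy ↦ hΦ y (hsub i hy)) (hosc i) (fun y hy ↦ hφK y (hsub i hy))
      _ = η * K * (b - a) := by rw [← mul_sum, sum_range_sub x, hx0, hxn]
  calc |∫ y in a..b, u y * φ y|
      = |∑ i ∈ range n, u (x i) * (Φ (x (i + 1)) - Φ (x i))
        + ∑ i ∈ range n, ((∫ y in x i..x (i + 1), u y * φ y)
          - u (x i) * (Φ (x (i + 1)) - Φ (x i)))| := by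
        rw [hsplit, ← sum_add_distrib]
        simp only [add_sub_cancel]
    _ ≤ _ := (abs_add_le _ _).trans (add_le_add hstieltjes herror)

theorem abs_integral_mul_le_mul_eVariationOn {u φ Φ : ℝ → ℝ} {a b M : ℝ} (hab : a ≤ b)
    (hu : ContinuousOn u (Icc a b)) (hubv : BoundedVariationOn u (Icc a b))
    (hφ : ContinuousOn φ (Icc a b)) (hΦ : ∀ x ∈ Icc a b, HasDerivAt Φ (φ x) x)
    (hΦa : Φ a = 0) (hΦb : Φ b = 0) (hΦM : ∀ x ∈ Icc a b, |Φ x| ≤ M) :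
    |∫ x in a..b, u x * φ x| ≤ M * (eVariationOn u (Icc a b)).toReal := by
  obtain ⟨K, hK⟩ := isCompact_Icc.exists_bound_of_continuousOn hφ
  have hK0 : 0 ≤ K := (norm_nonneg _).trans (hK a ⟨le_rfl, hab⟩)
  refine le_of_forall_pos_le_add fun ε hε ↦ ?_
  set η := ε / (K * (b - a) + 1)
  have hη : η * K * (b - a) ≤ ε := by
    rw [mul_assoc, div_mul_eq_mul_div, div_le_iff₀ (by positivity)]
    nlinarith [mul_nonneg hK0 (sub_nonneg.2 hab)]
  obtain ⟨d, hd, hud⟩ := Metric.uniformContinuousOn_iff_le.1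
    (isCompact_Icc.uniformContinuousOn_of_continuous hu) η (by positivity)
  obtain ⟨n, x, hx, hx0, hxn, hxmem, hxstep⟩ := exists_monotone_partition_Icc hab hd
  have hosc (i : ℕ) (y : ℝ) (hy : y ∈ Icc (x i) (x (i + 1))) : |u y - u (x i)| ≤ η := by
    rw [← Real.dist_eq]
    refine hud y ⟨(hxmem i).1.trans hy.1, hy.2.trans (hxmem (i + 1)).2⟩ (x i) (hxmem i) ?_
    rw [Real.dist_eq, abs_of_nonneg (sub_nonneg.2 hy.1)]
    linarith [hy.2, hxstep i]
  have hpart := abs_integral_mul_le_of_partition hx hx0 hxn hxmem hu hubv hφ hΦ hΦa hΦb hΦM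
    (fun y hy ↦ (Real.norm_eq_abs _).symm ▸ hK y hy) hosc
  linarith

theorem abs_integral_mul_cos_le {u : ℝ → ℝ} {j : ℕ} (hj : j ≠ 0)
    (hu : ContinuousOn u (Icc 0 (2 * π))) (hubv : BoundedVariationOn u (Icc 0 (2 * π))) :
    |∫ x in (0 : ℝ)..2 * π, u x * cos (j * x)| ≤ (eVariationOn u (Icc 0 (2 * π))).toReal / j := by
  have hj' : (0 : ℝ) < j := by positivity
  rw [div_eq_inv_mul]
  refine abs_integral_mul_le_mul_eVariationOn (Φ := fun x ↦ sin (j * x) / j) (by positivity) hu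
    hubv (by fun_prop) (fun x _ ↦ ?_) (by simp) ?_ (fun x _ ↦ ?_)
  · simpa [mul_div_assoc, hj'.ne'] using
      (((hasDerivAt_id x).const_mul (j : ℝ)).sin).div_const (j : ℝ)
  · have : (j : ℝ) * (2 * π) = ((2 * j : ℕ) : ℝ) * π := by push_cast; ring
    simp only [this, sin_nat_mul_pi, zero_div]
  · rw [abs_div, abs_of_pos hj', div_eq_mul_inv]
    exact mul_le_of_le_one_left (by positivity) (abs_sin_le_one _)

noncomputable def cosCoeff (u : ℝ → ℝ) (j : ℕ) : ℝ := 1 / π * ∫ x in (0 : ℝ)..2 * π, u x * cos (j * x)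

lemma cosCoeff_sub {u v : ℝ → ℝ} (hu : ContinuousOn u (Icc 0 (2 * π)))
    (hv : ContinuousOn v (Icc 0 (2 * π))) (j : ℕ) :
    cosCoeff (fun x ↦ u x - v x) j = cosCoeff u j - cosCoeff v j := by
  have hcos : ContinuousOn (fun x : ℝ ↦ cos (j * x)) (Icc 0 (2 * π)) := by fun_prop
  have h2π : (0 : ℝ) ≤ 2 * π := by positivity
  simp only [cosCoeff, sub_mul, ← mul_sub]
  congr 1
  exact integral_sub ((hu.mul hcos).intervalIntegrable_of_Icc h2π)
    ((hv.mul hcos).intervalIntegrable_of_Icc h2π)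

lemma abs_cosCoeff_le {u : ℝ → ℝ} {j : ℕ} (hj : j ≠ 0) (hu : ContinuousOn u (Icc 0 (2 * π)))
    (hubv : BoundedVariationOn u (Icc 0 (2 * π))) :
    |cosCoeff u j| ≤ (eVariationOn u (Icc 0 (2 * π))).toReal / (π * j) := by
  rw [cosCoeff, abs_mul, abs_of_pos (by positivity), one_div_mul_eq_div, mul_comm π, ← div_div]
  gcongr
  exact abs_integral_mul_cos_le hj hu hubv

theorem controlled_distortion_band_general (g h : ℝ → ℝ) (j : ℕ) (hj : 1 ≤ j)
    (q δ : ℝ) (hq : 0 < q) (N : ℕ)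
    (a0 : ℝ)
    (hg : ContinuousOn g (Set.Icc 0 (2 * π)))
    (hgcoef : (1 / π) * ∫ x in (0:ℝ)..(2 * π), g x * Real.cos (j * x) = 0)
    (hh : ContinuousOn h (Set.Icc 0 (2 * π)))
    (hvar : eVariationOn (fun x => h x - g x) (Set.Icc 0 (2 * π)) ≤
      ENNReal.ofReal (N * δ))
    (hδ : δ ≤ |a0| * π * j / (q * N)) :
    |(1 / π) * ∫ x in (0:ℝ)..(2 * π), h x * Real.cos (j * x)| ≤ |a0| / q := by
  have hj0 : j ≠ 0 := Nat.one_le_iff_ne_zero.1 hj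
  have hgcoef : cosCoeff g j = 0 := hgcoef
  have hbv : BoundedVariationOn (fun x ↦ h x - g x) (Icc 0 (2 * π)) :=
    ne_top_of_le_ne_top ENNReal.ofReal_ne_top hvar
  have hV : (eVariationOn (fun x ↦ h x - g x) (Icc 0 (2 * π))).toReal ≤ max (N * δ) 0 :=
    ENNReal.toReal_ofReal' ▸ ENNReal.toReal_mono ENNReal.ofReal_ne_top hvar
  have hbudget : max ((N : ℝ) * δ) 0 / (π * j) ≤ |a0| / q := by
    rcases le_or_gt ((N : ℝ) * δ) 0 with hNδ | hNδ
    · rw [max_eq_right hNδ, zero_div]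
      positivity
    have hN : (0 : ℝ) < N := lt_of_le_of_ne N.cast_nonneg fun hN0 ↦ by simp [← hN0] at hNδ
    rw [max_eq_left hNδ.le, div_le_div_iff₀ (by positivity) hq]
    rw [le_div_iff₀ (by positivity)] at hδ
    linarith
  calc |cosCoeff h j| = |cosCoeff (fun x ↦ h x - g x) j| := by
        rw [cosCoeff_sub hh hg, hgcoef, sub_zero]
    _ ≤ (eVariationOn (fun x ↦ h x - g x) (Icc 0 (2 * π))).toReal / (π * j) :=
        abs_cosCoeff_le hj0 (hh.sub hg) hbv
    _ ≤ max (N * δ) 0 / (π * j) := by gcongr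
    _ ≤ |a0| / q := hbudget

theorem controlled_distortion_band (f g h : ℝ → ℝ) (j : ℕ) (hj : 1 ≤ j)
    (q δ : ℝ) (hq : 0 < q) (N : ℕ) (hN : 1 ≤ N)
    (a0 : ℝ) (hne : a0 ≠ 0)
    (hf : ContinuousOn f (Set.Icc 0 (2 * π)))
    (hfbv : BoundedVariationOn f (Set.Icc 0 (2 * π)))
    (hg : ContinuousOn g (Set.Icc 0 (2 * π)))
    (hgcoef : (1 / π) * ∫ x in (0:ℝ)..(2 * π), g x * Real.cos (j * x) = 0)
    (hh : ContinuousOn h (Set.Icc 0 (2 * π)))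
    (hband : ∀ x ∈ Set.Icc 0 (2 * π), |h x - g x| ≤ δ / 2)
    (hvar : eVariationOn (fun x => h x - g x) (Set.Icc 0 (2 * π)) ≤
      ENNReal.ofReal (N * δ))
    (hδ : δ ≤ |a0| * π * j / (q * N)) :
    |(1 / π) * ∫ x in (0:ℝ)..(2 * π), h x * Real.cos (j * x)| ≤ |a0| / q :=
  controlled_distortion_band_general g h j hj q δ hq N a0 hg hgcoef hh hvar hδ
end
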